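/- Define Φ_ν(q) = ∑_{n=1}^∞ n^ν q^n/(1−q^n) for |q| < 1, and Q(q) = 1 + 240·Φ₃(q). Then Φ₇(q) = (Q(q)² − 1)/480. -/

import Mathlib

/-!
Writing `q = e^{2πiτ}`, the Lambert series `Φ_ν(q)` is `∑ σ_ν(n) qⁿ`, so `1 + 240 Φ₃` and
`1 + 480 Φ₇` are the q-expansions of the normalised Eisenstein series `E₄` and `E₈`
(the constants are `-2k / B_k` with `B₄ = B₈ = -1/30`). Level-one modular forms of weight 8
form a line, and `E₈`, `E₄²` both have constant term 1, hence `E₈ = E₄²`.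
-/

/-- Lambert-type Eisenstein series Φ_ν(q) = ∑_{n=1}^∞ n^ν q^n/(1−q^n). -/
noncomputable def Phi (ν : ℕ) (q : ℂ) : ℂ :=
  ∑' n : ℕ, ((n : ℂ) + 1) ^ ν * q ^ (n + 1) / (1 - q ^ (n + 1))

open Real ModularForm EisensteinSeries UpperHalfPlane MatrixGroups
open scoped ArithmeticFunction.sigma

lemma Phi_eq_tsum_sigma (ν : ℕ) {q : ℂ} (hq : ‖q‖ < 1) :
    Phi ν q = ∑' n : ℕ+, σ ν n * q ^ (n : ℕ) := by
  rw [← tsum_pow_div_one_sub_eq_tsum_sigma hq,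
    tsum_pnat_eq_tsum_succ (f := fun n : ℕ ↦ (n : ℂ) ^ ν * q ^ n / (1 - q ^ n))]
  simp [Phi]

lemma EisensteinSeries.E_eq_one_sub_mul_Phi {k : ℕ} (hk : 3 ≤ k) (hk2 : Even k) (τ : ℍ) :
    E hk τ = 1 - 2 * k / bernoulli k * Phi (k - 1) (Complex.exp (2 * π * Complex.I * τ)) := by
  rw [q_expansion_bernoulli hk hk2, Phi_eq_tsum_sigma _ (norm_exp_two_pi_I_lt_one τ)]
  simp_rw [zpow_natCast]

noncomputable abbrev ModularForm.E₈ : ModularForm 𝒮ℒ 8 := E (by norm_num : 3 ≤ 8)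

lemma ModularForm.E₈_apply_eq_E₄_apply_sq (τ : ℍ) : E₈ τ = E₄ τ ^ 2 := by
  have hrank : Module.finrank ℂ (ModularForm 𝒮ℒ 8) = 1 :=
    Module.rank_eq_one_iff_finrank_eq_one.mp
      (by simpa [Nat.ModEq] using dimension_level_one 8 ⟨4, rfl⟩)
  obtain ⟨c, hc⟩ : ∃ c : ℂ, c • E₈ = E₄.mul E₄ :=
    (finrank_eq_one_iff_of_nonzero' _ (E_ne_zero _ ⟨4, rfl⟩)).mp hrank _
  have hqExpansion : c • qExpansion 1 E₈ = qExpansion 1 E₄ ^ 2 := by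
    rw [pow_two, ← ModularForm.qExpansion_mul one_pos one_mem_strictPeriods_SL E₄ E₄,
      ← ModularForm.qExpansion_smul one_pos one_mem_strictPeriods_SL c,
      show (c • E₈ : ℍ → ℂ) = E₄.mul E₄ from congrArg DFunLike.coe hc]
  have hc1 : c = 1 := by
    simpa [E_qExpansion_coeff_zero _ ⟨2, rfl⟩, E_qExpansion_coeff_zero _ ⟨4, rfl⟩, pow_two,
      PowerSeries.coeff_mul] using congrArg (PowerSeries.coeff 0) hqExpansion
  calc E₈ τ = (c • E₈) τ := by simp [hc1]
    _ = E₄ τ ^ 2 := by rw [hc, pow_two]; rfl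

lemma UpperHalfPlane.exists_exp_eq_of_norm_lt_one {q : ℂ} (hq : ‖q‖ < 1) (hq0 : q ≠ 0) :
    ∃ τ : ℍ, Complex.exp (2 * π * Complex.I * τ) = q :=
  ⟨⟨_, Function.Periodic.im_invQParam_pos_of_norm_lt_one one_pos hq hq0⟩, by
    simpa [Function.Periodic.qParam] using Function.Periodic.qParam_right_inv one_ne_zero hq0⟩

/-- With Q = 1 + 240Φ₃, Φ₇ = (Q² − 1)/480 for |q| < 1. -/
theorem Phi7_eval (q : ℂ) (hq : ‖q‖ < 1) :
    Phi 7 q = ((1 + 240 * Phi 3 q) ^ 2 - 1) / 480 := by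
  rcases eq_or_ne q 0 with rfl | hq0
  · simp [Phi]
  obtain ⟨τ, rfl⟩ := exists_exp_eq_of_norm_lt_one hq hq0
  have h := E₈_apply_eq_E₄_apply_sq τ
  rw [E_eq_one_sub_mul_Phi _ ⟨4, rfl⟩, E_eq_one_sub_mul_Phi _ ⟨2, rfl⟩,
    show bernoulli 8 = -1 / 30 by decide +kernel, show bernoulli 4 = -1 / 30 by decide +kernel] at h
  norm_num at h
  linear_combination h / 480
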